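/- Let s_0, s_1, s_2 be the 3-hyperbolic functions. Then for all z ∈ ℂ: s_0(3z) = 1 + 9 s_0(z) s_1(z) s_2(z). -/

import Mathlib

/-! The three exponentials `A = e^z`, `B = e^{zζ}`, `C = e^{zζ²}` satisfy `ABC = e^{z(1+ζ+ζ²)} = 1`,
and `3 s_0, 3 s_1, 3 s_2` are the three linear forms `A + B + C`, `A + ζ²B + ζC`, `A + ζB + ζ²C`.
Their product is `A³ + B³ + C³ - 3ABC = 3 s_0(3z) - 3` by the classical factorization of the
sum of three cubes over the cube roots of unity. -/

open Complex Finset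

noncomputable def zeta3 : ℂ := Complex.exp (2 * Real.pi * Complex.I / 3)

noncomputable def s3 (k : ℕ) (z : ℂ) : ℂ :=
  (1 / 3) * ∑ m ∈ Finset.range 3, ((zeta3 ^ m)⁻¹) ^ k * Complex.exp (z * zeta3 ^ m)

theorem add_mul_add_mul_add_eq_cube_add_cube_add_cube_sub {R : Type*} [CommRing R] {ω : R}
    (hω : 1 + ω + ω ^ 2 = 0) (a b c : R) :
    (a + b + c) * (a + ω ^ 2 * b + ω * c) * (a + ω * b + ω ^ 2 * c) =
      a ^ 3 + b ^ 3 + c ^ 3 - 3 * a * b * c := by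
  -- modulo `1 + ω + ω²`, the last two factors multiply to `a² + b² + c² - ab - bc - ca`
  linear_combination
    (a + b + c) * (a * b + a * c + (ω - 1) * (b ^ 2 + c ^ 2) + (1 + ω ^ 2 - ω) * b * c) * hω

theorem zeta3_isPrimitiveRoot : IsPrimitiveRoot zeta3 3 :=
  Complex.isPrimitiveRoot_exp 3 three_ne_zero

theorem one_add_zeta3_add_zeta3_sq : 1 + zeta3 + zeta3 ^ 2 = 0 := by
  simpa [Finset.sum_range_succ, add_assoc] using
    zeta3_isPrimitiveRoot.geom_sum_eq_zero (by norm_num)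

theorem zeta3_inv : zeta3⁻¹ = zeta3 ^ 2 :=
  inv_eq_of_mul_eq_one_right <| by rw [← pow_succ', zeta3_isPrimitiveRoot.pow_eq_one]

theorem zeta3_sq_inv : (zeta3 ^ 2)⁻¹ = zeta3 := by
  rw [← zeta3_inv, inv_inv]

theorem zeta3_sq_sq : (zeta3 ^ 2) ^ 2 = zeta3 := by
  rw [← pow_mul, show 2 * 2 = 3 + 1 from rfl, pow_succ, zeta3_isPrimitiveRoot.pow_eq_one, one_mul]

theorem three_mul_s3 (k : ℕ) (z : ℂ) :
    3 * s3 k z = exp z + (zeta3 ^ 2) ^ k * exp (z * zeta3) + zeta3 ^ k * exp (z * zeta3 ^ 2) := by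
  simp only [s3, Finset.sum_range_succ, Finset.sum_range_zero, pow_zero, pow_one, inv_one,
    one_pow, mul_one, zeta3_inv, zeta3_sq_inv]
  ring

theorem exp_mul_exp_mul_zeta3_mul_exp_mul_zeta3_sq (z : ℂ) :
    exp z * exp (z * zeta3) * exp (z * zeta3 ^ 2) = 1 := by
  rw [← exp_add, ← exp_add, ← exp_zero, ← mul_zero z, ← one_add_zeta3_add_zeta3_sq]
  congr 1
  ring

theorem s3_triple_argument (z : ℂ) :
    s3 0 (3 * z) = 1 + 9 * s3 0 z * s3 1 z * s3 2 z := by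
  have exp_three_mul (x : ℂ) : exp (3 * x) = exp x ^ 3 := by simpa using exp_nat_mul x 3
  have hs0 := three_mul_s3 0 z
  have hs1 := three_mul_s3 1 z
  have hs2 := three_mul_s3 2 z
  have h3z := three_mul_s3 0 (3 * z)
  simp only [pow_zero, pow_one, one_mul, zeta3_sq_sq, mul_assoc 3 z, exp_three_mul]
    at hs0 hs1 hs2 h3z
  have hprod : 27 * (s3 0 z * s3 1 z * s3 2 z) =
      exp z ^ 3 + exp (z * zeta3) ^ 3 + exp (z * zeta3 ^ 2) ^ 3
        - 3 * exp z * exp (z * zeta3) * exp (z * zeta3 ^ 2) := by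
    rw [show 27 * (s3 0 z * s3 1 z * s3 2 z) = 3 * s3 0 z * (3 * s3 1 z) * (3 * s3 2 z) by ring,
      hs0, hs1, hs2, add_mul_add_mul_add_eq_cube_add_cube_add_cube_sub one_add_zeta3_add_zeta3_sq]
  linear_combination h3z / 3 - hprod / 3 + exp_mul_exp_mul_zeta3_mul_exp_mul_zeta3_sq z
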